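/- Let ν ≥ 0 be a real number and let J_ν be the Bessel function of the first kind, defined for r > 0 by the absolutely convergent series J_ν(r) = Σ_{k=0}^∞ [(−1)^k / (Γ(k+1) Γ(k+ν+1))] · (r/2)^(2k+ν). Then J_ν is bounded on (0,∞): there exists a constant C > 0 such that |J_ν(r)| ≤ C for all r > 0. -/

import Mathlib

open Real

/-- The Bessel function of the first kind `J_ν`, defined for `r > 0` by its power
series `J_ν(r) = Σ_{k=0}^∞ [(−1)^k / (Γ(k+1) Γ(k+ν+1))] · (r/2)^(2k+ν)`. -/
noncomputable def besselJ (ν : ℝ) (r : ℝ) : ℝ :=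
  ∑' k : ℕ, ((-1 : ℝ) ^ k / (Real.Gamma ((k : ℝ) + 1) * Real.Gamma ((k : ℝ) + ν + 1))) *
    (r / 2) ^ (2 * (k : ℝ) + ν)

/-! For `r > 0`, `J_ν(r) = (r/2)^ν g(r²/4)` where `g` is an entire power series with
`u g'' + (ν + 1) g' + g = 0`, so `J_ν` solves Bessel's equation
`r² J'' + r J' + (r² - ν²) J = 0`. Along any solution the energy `J² + r² J'² / (r² - ν²)` has
derivative `-2 r³ J'² / (r² - ν²)² ≤ 0` for `r > ν`, so it bounds `J²` on `[ν + 1, ∞)`; on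
`(0, ν + 1]`, `J_ν` is bounded because `(r/2)^ν g(r²/4)` is continuous on `[0, ν + 1]`. -/

section PowerSeries

open Nat

noncomputable def powerSeriesSum (c : ℕ → ℝ) (x : ℝ) : ℝ := ∑' k, c k * x ^ k

noncomputable def derivCoeff (c : ℕ → ℝ) (k : ℕ) : ℝ := (k + 1) * c (k + 1)

variable {c : ℕ → ℝ} {D : ℝ}

theorem abs_derivCoeff_le (hc : ∀ k, |c k| ≤ D / k !) (k : ℕ) :
    |derivCoeff c k| ≤ D / k ! := by
  have hk : (0 : ℝ) < k + 1 := by positivity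
  calc |derivCoeff c k| = (k + 1) * |c (k + 1)| := by
        rw [derivCoeff, abs_mul, abs_of_pos hk]
    _ ≤ (k + 1) * (D / (k + 1)!) := by gcongr; exact hc _
    _ = D / k ! := by rw [factorial_succ]; push_cast; field_simp

theorem summable_norm_mul_pow (hc : ∀ k, |c k| ≤ D / k !) (x : ℝ) :
    Summable fun k => ‖c k * x ^ k‖ := by
  refine .of_nonneg_of_le (fun _ => norm_nonneg _) (fun k => ?_)
    ((Real.summable_pow_div_factorial |x|).mul_left D)
  rw [norm_mul, norm_pow, norm_eq_abs, norm_eq_abs, mul_div_assoc', ← div_mul_eq_mul_div]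
  gcongr
  exact hc k

theorem hasSum_powerSeriesSum (hc : ∀ k, |c k| ≤ D / k !) (x : ℝ) :
    HasSum (fun k => c k * x ^ k) (powerSeriesSum c x) :=
  (summable_norm_mul_pow hc x).of_norm.hasSum

theorem hasDerivAt_powerSeriesSum (hc : ∀ k, |c k| ≤ D / k !) (x : ℝ) :
    HasDerivAt (powerSeriesSum c) (powerSeriesSum (derivCoeff c) x) x := by
  have hsplit : powerSeriesSum c = fun y => c 0 + ∑' k, c (k + 1) * y ^ (k + 1) := by
    ext y
    rw [powerSeriesSum]
    simpa using (summable_norm_mul_pow hc y).of_norm.tsum_eq_zero_add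
  have hD : 0 ≤ D := by simpa using (abs_nonneg _).trans (hc 0)
  set R := |x| + 1
  have hbound : ∀ k, ∀ y ∈ Set.Ioo (-R) R, ‖derivCoeff c k * y ^ k‖ ≤ D * (R ^ k / k !) := by
    intro k y hy
    rw [norm_mul, norm_pow, norm_eq_abs, norm_eq_abs, mul_div_assoc', ← div_mul_eq_mul_div]
    exact mul_le_mul (abs_derivCoeff_le hc k)
      (pow_le_pow_left₀ (abs_nonneg y) (abs_le.mpr ⟨hy.1.le, hy.2.le⟩) k) (by positivity)
      (by positivity)
  have hx : x ∈ Set.Ioo (-R) R := ⟨by linarith [neg_abs_le x], by linarith [le_abs_self x]⟩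
  rw [hsplit]
  refine (hasDerivAt_tsum_of_isPreconnected ((Real.summable_pow_div_factorial R).mul_left D)
    isOpen_Ioo isPreconnected_Ioo (fun k y _ => ?_) hbound hx ?_ hx).const_add (c 0)
  · refine ((hasDerivAt_pow (k + 1) y).const_mul (c (k + 1))).congr_deriv ?_
    simp only [derivCoeff, add_tsub_cancel_right]; push_cast; ring
  · exact (summable_nat_add_iff 1).mpr (summable_norm_mul_pow hc x).of_norm

theorem hasSum_mul_powerSeriesSum_derivCoeff (hc : ∀ k, |derivCoeff c k| ≤ D / k !) (x : ℝ) :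
    HasSum (fun k => k * c k * x ^ k) (x * powerSeriesSum (derivCoeff c) x) := by
  rw [← hasSum_nat_add_iff' 1]
  simp only [Finset.range_one, Finset.sum_singleton, CharP.cast_eq_zero, zero_mul, sub_zero]
  refine ((hasSum_powerSeriesSum hc x).mul_left x).congr_fun fun k => ?_
  simp only [derivCoeff]; push_cast; ring

end PowerSeries

section BesselEquation

variable {ν r : ℝ}

theorem hasDerivAt_half_rpow_mul {h : ℝ → ℝ} {h' : ℝ} (hr : 0 < r) (hh : HasDerivAt h h' r) :
    HasDerivAt (fun s => (s / 2) ^ ν * h s) ((r / 2) ^ ν * (ν / r * h r + h')) r := by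
  have hpow : HasDerivAt (fun s : ℝ => (s / 2) ^ ν) (ν * (r / 2) ^ (ν - 1) * (1 / 2)) r :=
    (hasDerivAt_rpow_const (Or.inl (by positivity))).comp r ((hasDerivAt_id r).div_const 2)
  refine (hpow.mul hh).congr_deriv ?_
  rw [rpow_sub (by positivity), rpow_one]
  field_simp

-- If `h` solves `r h'' + (2ν + 1) h' + r h = 0`, then `(r/2)^ν h` solves Bessel's equation.
theorem hasDerivAt_half_rpow_mul_of_reduced {h h' : ℝ → ℝ} (hr : 0 < r)
    (hh : HasDerivAt h (h' r) r) (hh' : HasDerivAt h' (-((2 * ν + 1) / r * h' r) - h r) r) :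
    HasDerivAt (fun s => (s / 2) ^ ν * (ν / s * h s + h' s))
      ((ν ^ 2 / r ^ 2 - 1) * ((r / 2) ^ ν * h r) - (r / 2) ^ ν * (ν / r * h r + h' r) / r) r := by
  refine (hasDerivAt_half_rpow_mul hr
    ((((hasDerivAt_inv hr.ne').const_mul ν).mul hh).add hh')).congr_deriv ?_
  simp only [Pi.add_apply, Pi.mul_apply]
  field_simp
  ring

theorem sq_le_besselEnergy {r₀ : ℝ} {f f' : ℝ → ℝ} (hr₀ : 0 < r₀) (hνr₀ : ν ^ 2 < r₀ ^ 2)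
    (hf : ∀ s, r₀ ≤ s → HasDerivAt f (f' s) s)
    (hf' : ∀ s, r₀ ≤ s → HasDerivAt f' ((ν ^ 2 / s ^ 2 - 1) * f s - f' s / s) s)
    (hr : r₀ ≤ r) :
    f r ^ 2 ≤ f r₀ ^ 2 + r₀ ^ 2 * f' r₀ ^ 2 / (r₀ ^ 2 - ν ^ 2) := by
  set E := fun s => f s ^ 2 + s ^ 2 * f' s ^ 2 / (s ^ 2 - ν ^ 2)
  have hpos : ∀ s, r₀ ≤ s → 0 < s ^ 2 - ν ^ 2 := fun s hs => by nlinarith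
  have hE : ∀ s, r₀ ≤ s → HasDerivAt E (-(2 * s ^ 3 * f' s ^ 2 / (s ^ 2 - ν ^ 2) ^ 2)) s := by
    intro s hs
    have hs0 : s ≠ 0 := by linarith
    have hsν : s ^ 2 - ν ^ 2 ≠ 0 := (hpos s hs).ne'
    refine (((hf s hs).pow 2).add (((hasDerivAt_pow 2 s).mul ((hf' s hs).pow 2)).div
      ((hasDerivAt_pow 2 s).sub_const (ν ^ 2)) hsν)).congr_deriv ?_
    simp only [Pi.mul_apply, Pi.pow_apply]
    field_simp
    ring
  have hanti : AntitoneOn E (Set.Ici r₀) := by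
    refine antitoneOn_of_hasDerivWithinAt_nonpos (convex_Ici r₀)
      (f' := fun s => -(2 * s ^ 3 * f' s ^ 2 / (s ^ 2 - ν ^ 2) ^ 2))
      (fun s hs => (hE s hs).continuousAt.continuousWithinAt) (fun s hs => ?_) (fun s hs => ?_)
    · rw [interior_Ici] at hs
      exact (hE s hs.le).hasDerivWithinAt
    · rw [interior_Ici] at hs
      have hs0 : 0 < s := hr₀.trans hs
      exact neg_nonpos.mpr (by positivity)
  calc f r ^ 2 ≤ E r := le_add_of_nonneg_right (div_nonneg (by positivity) (hpos r hr).le)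
    _ ≤ E r₀ := hanti Set.self_mem_Ici hr hr

end BesselEquation

theorem Real.Gamma_le_Gamma_add_nat {s : ℝ} (hs : 1 ≤ s) (k : ℕ) : Gamma s ≤ Gamma (s + k) := by
  induction k with
  | zero => simp
  | succ k ih =>
    have hsk : 1 ≤ s + k := by linarith [k.cast_nonneg (α := ℝ)]
    calc Gamma s ≤ Gamma (s + k) := ih
      _ ≤ (s + k) * Gamma (s + k) :=
        le_mul_of_one_le_left (Gamma_nonneg_of_nonneg (by linarith)) hsk
      _ = Gamma (s + (k + 1 : ℕ)) := by
        rw [Nat.cast_succ, ← add_assoc, Gamma_add_one (by linarith)]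

theorem hasDerivAt_sq_div_four (r : ℝ) : HasDerivAt (fun s : ℝ => s ^ 2 / 4) (r / 2) r := by
  refine ((hasDerivAt_pow 2 r).div_const 4).congr_deriv ?_
  norm_num
  ring

namespace Bessel

open Nat

noncomputable def coeff (ν : ℝ) (k : ℕ) : ℝ :=
  (-1) ^ k / (Gamma ((k : ℝ) + 1) * Gamma ((k : ℝ) + ν + 1))

variable {ν : ℝ}

theorem abs_coeff_le (hν : 0 ≤ ν) (k : ℕ) : |coeff ν k| ≤ (Gamma (ν + 1))⁻¹ / k ! := by
  have hΓ : 0 < Gamma (ν + 1) := Gamma_pos_of_pos (by linarith)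
  have hΓk : Gamma (ν + 1) ≤ Gamma ((k : ℝ) + ν + 1) := by
    simpa [add_comm, add_left_comm, add_assoc] using
      Gamma_le_Gamma_add_nat (s := ν + 1) (by linarith) k
  rw [coeff, abs_div, abs_pow, abs_neg, abs_one, one_pow, Gamma_nat_eq_factorial,
    abs_of_pos (by positivity)]
  calc 1 / (k ! * Gamma ((k : ℝ) + ν + 1)) = (Gamma ((k : ℝ) + ν + 1))⁻¹ / k ! := by ring
    _ ≤ (Gamma (ν + 1))⁻¹ / k ! := by gcongr

theorem coeff_succ (hν : -1 < ν) (k : ℕ) :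
    ((k : ℝ) + 1) * ((k : ℝ) + ν + 1) * coeff ν (k + 1) = -coeff ν k := by
  have hk : (k : ℝ) + 1 ≠ 0 := by positivity
  have hkν : (k : ℝ) + ν + 1 ≠ 0 := by linarith [k.cast_nonneg (α := ℝ)]
  have hΓ : Gamma ((k : ℝ) + 1) ≠ 0 := (Gamma_pos_of_pos (by positivity)).ne'
  have hΓν : Gamma ((k : ℝ) + ν + 1) ≠ 0 :=
    (Gamma_pos_of_pos (by linarith [k.cast_nonneg (α := ℝ)])).ne'
  rw [coeff, coeff, Nat.cast_succ, add_right_comm _ 1 ν, Gamma_add_one hk, Gamma_add_one hkν,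
    pow_succ]
  field_simp

theorem powerSeriesSum_coeff_ode (hν : 0 ≤ ν) (u : ℝ) :
    u * powerSeriesSum (derivCoeff (derivCoeff (coeff ν))) u
      + (ν + 1) * powerSeriesSum (derivCoeff (coeff ν)) u + powerSeriesSum (coeff ν) u = 0 := by
  have hc := abs_coeff_le hν
  have hc' := abs_derivCoeff_le hc
  have hsum := ((hasSum_mul_powerSeriesSum_derivCoeff (abs_derivCoeff_le hc') u).add
    ((hasSum_powerSeriesSum hc' u).mul_left (ν + 1))).add (hasSum_powerSeriesSum hc u)
  have hterm : ∀ k : ℕ, k * derivCoeff (coeff ν) k * u ^ k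
      + (ν + 1) * (derivCoeff (coeff ν) k * u ^ k) + coeff ν k * u ^ k = 0 := by
    intro k
    simp only [derivCoeff]
    linear_combination u ^ k * coeff_succ (by linarith) k
  simp only [hterm] at hsum
  exact hsum.unique hasSum_zero

noncomputable def regular (ν r : ℝ) : ℝ := powerSeriesSum (coeff ν) (r ^ 2 / 4)

noncomputable def regularDeriv (ν r : ℝ) : ℝ :=
  r / 2 * powerSeriesSum (derivCoeff (coeff ν)) (r ^ 2 / 4)

theorem hasDerivAt_regular (hν : 0 ≤ ν) (r : ℝ) :
    HasDerivAt (regular ν) (regularDeriv ν r) r := by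
  rw [regularDeriv, mul_comm]
  exact (hasDerivAt_powerSeriesSum (abs_coeff_le hν) _).comp r (hasDerivAt_sq_div_four r)

theorem hasDerivAt_regularDeriv (hν : 0 ≤ ν) {r : ℝ} (hr : r ≠ 0) :
    HasDerivAt (regularDeriv ν) (-((2 * ν + 1) / r * regularDeriv ν r) - regular ν r) r := by
  have hc' := abs_derivCoeff_le (abs_coeff_le hν)
  have hode := powerSeriesSum_coeff_ode hν (r ^ 2 / 4)
  refine (((hasDerivAt_id r).div_const 2).mul
    ((hasDerivAt_powerSeriesSum hc' _).comp r (hasDerivAt_sq_div_four r))).congr_deriv ?_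
  simp only [regular, regularDeriv, id, Function.comp_apply]
  field_simp
  linear_combination 4 * hode

noncomputable def J (ν r : ℝ) : ℝ := (r / 2) ^ ν * regular ν r

noncomputable def derivJ (ν r : ℝ) : ℝ := (r / 2) ^ ν * (ν / r * regular ν r + regularDeriv ν r)

theorem besselJ_eq_J {r : ℝ} (hr : 0 < r) : besselJ ν r = J ν r := by
  have hpow : ∀ k : ℕ, (r / 2) ^ (2 * (k : ℝ) + ν) = (r / 2) ^ ν * (r ^ 2 / 4) ^ k := fun k => by
    rw [rpow_add (by positivity), rpow_mul_natCast (by positivity), rpow_two, mul_comm]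
    norm_num [div_pow]
  simp only [besselJ, J, regular, powerSeriesSum, hpow, ← tsum_mul_left, coeff]
  congr 1 with k
  ring

theorem continuous_J (hν : 0 ≤ ν) : Continuous (J ν) :=
  ((continuous_rpow_const hν).comp (continuous_id.div_const 2)).mul
    (continuous_iff_continuousAt.mpr fun r => (hasDerivAt_regular hν r).continuousAt)

theorem hasDerivAt_J (hν : 0 ≤ ν) {r : ℝ} (hr : 0 < r) : HasDerivAt (J ν) (derivJ ν r) r :=
  hasDerivAt_half_rpow_mul hr (hasDerivAt_regular hν r)

theorem hasDerivAt_derivJ (hν : 0 ≤ ν) {r : ℝ} (hr : 0 < r) :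
    HasDerivAt (derivJ ν) ((ν ^ 2 / r ^ 2 - 1) * J ν r - derivJ ν r / r) r :=
  hasDerivAt_half_rpow_mul_of_reduced hr (hasDerivAt_regular hν r)
    (hasDerivAt_regularDeriv hν hr.ne')

end Bessel

theorem besselJ_bounded (ν : ℝ) (hν : 0 ≤ ν) :
    ∃ C : ℝ, 0 < C ∧ ∀ r : ℝ, 0 < r → |besselJ ν r| ≤ C := by
  obtain ⟨M, hM⟩ := (isCompact_Icc (a := 0) (b := ν + 1)).exists_bound_of_continuousOn
    (Bessel.continuous_J hν).continuousOn
  have hr₀ : 0 < ν + 1 := by linarith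
  set E₀ := Bessel.J ν (ν + 1) ^ 2
    + (ν + 1) ^ 2 * Bessel.derivJ ν (ν + 1) ^ 2 / ((ν + 1) ^ 2 - ν ^ 2)
  have henergy : ∀ r, ν + 1 ≤ r → Bessel.J ν r ^ 2 ≤ E₀ := fun r hr =>
    sq_le_besselEnergy hr₀ (by nlinarith)
      (fun s hs => Bessel.hasDerivAt_J hν (hr₀.trans_le hs))
      (fun s hs => Bessel.hasDerivAt_derivJ hν (hr₀.trans_le hs)) hr
  refine ⟨max M √E₀ + 1, by positivity, fun r hr => ?_⟩
  rw [Bessel.besselJ_eq_J hr]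
  rcases le_total r (ν + 1) with hle | hge
  · have := hM r ⟨hr.le, hle⟩
    rw [norm_eq_abs] at this
    linarith [le_max_left M √E₀]
  · linarith [abs_le_sqrt (henergy r hge), le_max_right M √E₀]
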